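/- Let a, b, c ∈ Aut(X*) be defined by the wreath recursion a = σ(c,c), b = (c,c), c = (b,a), and let G = ⟨a,b,c⟩. Then a² = b² = c² = 1, the subgroup H = ⟨ac, cb⟩ is normal of index 2 in G, conjugation by c inverts both generators ac and cb of H, and H is isomorphic to the lamplighter group ℤ ≀ C₂ = (⊕_{i∈ℤ} ℤ/2ℤ) ⋊ ℤ; consequently G ≅ C₂ ⋉ (ℤ ≀ C₂). -/

import Mathlib

/-- `WRec s f f₀ f₁` says that the tree automorphism `f` of the binary rooted tree
`X* = List Bool` is given by the wreath recursion `f = σˢ(f₀, f₁)`: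
the root permutation of `f` is the transposition `σ` when `s = true` and is trivial when
`s = false`, the section of `f` at the letter `0 = false` is `f₀`, and the section of `f`
at the letter `1 = true` is `f₁`. -/
def WRec (s : Bool) (f f₀ f₁ : Equiv.Perm (List Bool)) : Prop :=
  f [] = [] ∧ (∀ w : List Bool, f (false :: w) = s :: f₀ w) ∧
    (∀ w : List Bool, f (true :: w) = (!s) :: f₁ w)

/-- The translation `a ↦ a + n` of `ℤ`. -/
def shiftE (n : ℤ) : ℤ ≃ ℤ where
  toFun a := a + n
  invFun a := a - n
  left_inv a := by show a + n - n = a; omega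
  right_inv a := by show a - n + n = a; omega

/-- The shift by `n` of a finitely supported function `ℤ →₀ ZMod 2`
(an element of `⊕_{i ∈ ℤ} ℤ/2ℤ`). -/
def shiftF (n : ℤ) (f : ℤ →₀ ZMod 2) : ℤ →₀ ZMod 2 :=
  Finsupp.equivMapDomain (shiftE n) f

theorem shiftF_apply (n : ℤ) (f : ℤ →₀ ZMod 2) (a : ℤ) : shiftF n f a = f (a - n) := rfl

theorem shiftF_add (n : ℤ) (f g : ℤ →₀ ZMod 2) :
    shiftF n (f + g) = shiftF n f + shiftF n g := by
  ext a
  simp [shiftF_apply]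

theorem shiftF_shiftF (m n : ℤ) (f : ℤ →₀ ZMod 2) :
    shiftF m (shiftF n f) = shiftF (m + n) f := by
  ext a
  rw [shiftF_apply, shiftF_apply, shiftF_apply]
  congr 1
  omega

theorem shiftF_zero (f : ℤ →₀ ZMod 2) : shiftF 0 f = f := by
  ext a
  rw [shiftF_apply, sub_zero]

theorem shiftF_zero_fun (n : ℤ) : shiftF n 0 = 0 := by
  ext a
  rw [shiftF_apply]
  rfl

/-- The lamplighter group `ℤ ≀ C₂`, i.e. the restricted wreath product
`(⊕_{i ∈ ℤ} ℤ/2ℤ) ⋊ ℤ` where `ℤ` acts by shifting the coordinates.  It is realized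
concretely as the set of pairs `(f, m)` with `f : ℤ →₀ ZMod 2` a finitely supported
function (an element of `⊕_{i ∈ ℤ} ℤ/2ℤ`) and `m : ℤ`, with the semidirect product
multiplication `(f, m) · (g, n) = (f + shift_m g, m + n)`. -/
structure Lamplighter where
  lamps : ℤ →₀ ZMod 2
  pos : ℤ

namespace Lamplighter

noncomputable instance : Mul Lamplighter :=
  ⟨fun x y => ⟨x.lamps + shiftF x.pos y.lamps, x.pos + y.pos⟩⟩
instance : One Lamplighter := ⟨⟨0, 0⟩⟩
noncomputable instance : Inv Lamplighter :=
  ⟨fun x => ⟨shiftF (-x.pos) (-x.lamps), -x.pos⟩⟩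

@[simp] theorem mul_lamps (x y : Lamplighter) :
    (x * y).lamps = x.lamps + shiftF x.pos y.lamps := rfl
@[simp] theorem mul_pos (x y : Lamplighter) : (x * y).pos = x.pos + y.pos := rfl
@[simp] theorem one_lamps : (1 : Lamplighter).lamps = 0 := rfl
@[simp] theorem one_pos : (1 : Lamplighter).pos = 0 := rfl
@[simp] theorem inv_lamps (x : Lamplighter) : x⁻¹.lamps = shiftF (-x.pos) (-x.lamps) := rfl
@[simp] theorem inv_pos (x : Lamplighter) : x⁻¹.pos = -x.pos := rfl

@[ext] theorem ext {x y : Lamplighter} (h₁ : x.lamps = y.lamps) (h₂ : x.pos = y.pos) :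
    x = y := by
  cases x; cases y; cases h₁; cases h₂; rfl

noncomputable instance : Group Lamplighter where
  mul := (· * ·)
  one := 1
  inv := (·⁻¹)
  mul_assoc x y z := by
    ext
    · simp [shiftF_add, shiftF_shiftF, add_assoc]
    · simp [add_assoc]
  one_mul x := by
    ext
    · simp [shiftF_zero]
    · simp
  mul_one x := by
    ext
    · simp [shiftF_zero_fun]
    · simp
  inv_mul_cancel x := by
    ext
    · rw [mul_lamps, inv_lamps, inv_pos, ← shiftF_add, neg_add_cancel, shiftF_zero_fun,
        one_lamps]
    · rw [mul_pos, inv_pos, neg_add_cancel, one_pos]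

end Lamplighter

/-!
Let `u = ac` and, for `S : ℕ → ZMod 2`, let `flip S` toggle the `n`-th letter of every word
exactly when `S n = 1`. The flips form a copy of the elementary abelian group `ℕ → ZMod 2`, and
`ab` is the flip of the first letter. Reading off the sections of `u` and `u⁻¹` shows that
conjugation by `u` maps flips to flips, so the lamps `εᵢ = uⁱ (ab) u⁻ⁱ` commute. The last nonzero
entry of the sequence of `εᵢ` sits at `2i` for `i ≥ 0` and at `-2i - 1` for `i < 0`; these
positions are distinct, so the lamps are independent and `(f, m) ↦ (∏ εᵢ ^ f i) uᵐ` embeds the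
lamplighter group onto `H = ⟨u, cb⟩`. Conjugation by the involution `c` inverts `u` and sends
`εᵢ` to `ε₋₁₋ᵢ`. Finally `c ∉ H`, because the involutions of `H` are flips and `c` is not one;
hence `G = H ⋊ ⟨c⟩`.
-/

section SemidirectProduct

variable {N K P : Type*} [Group N] [Group K] [Group P] {φ : K →* MulAut N}

theorem conj_mem_map_range_inl (χ : SemidirectProduct N K φ →* P) {g h : P} (hg : g ∈ χ.range)
    (hh : h ∈ (SemidirectProduct.inl.range).map χ) :
    g * h * g⁻¹ ∈ (SemidirectProduct.inl.range).map χ := by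
  obtain ⟨s, rfl⟩ := hg
  obtain ⟨y, hy, rfl⟩ := hh
  refine ⟨s * y * s⁻¹, ?_, by simp only [map_mul, map_inv]⟩
  rw [SemidirectProduct.range_inl_eq_ker_rightHom] at hy ⊢
  exact SemidirectProduct.rightHom.normal_ker.conj_mem y hy s

theorem relIndex_map_range_inl (χ : SemidirectProduct N K φ →* P) (hχ : Function.Injective χ) :
    ((SemidirectProduct.inl.range).map χ).relIndex χ.range = Nat.card K := by
  rw [MonoidHom.range_eq_map χ, Subgroup.relIndex_map_map_of_injective _ _ hχ,
    Subgroup.relIndex_top_right, SemidirectProduct.range_inl_eq_ker_rightHom, Subgroup.index_ker,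
    MonoidHom.range_eq_top.2 SemidirectProduct.rightHom_surjective, Subgroup.card_top]

end SemidirectProduct

namespace LamplighterAutomaton

open Equiv

theorem zmod_two_eq_zero_or_one (s : ZMod 2) : s = 0 ∨ s = 1 := by
  revert s; decide

theorem multiplicative_zmod_two_eq_one_or_ofAdd_one (k : Multiplicative (ZMod 2)) :
    k = 1 ∨ k = Multiplicative.ofAdd 1 := by
  revert k; decide

def c2Lift {M : Type*} [Group M] (g : M) (hg : g * g = 1) : Multiplicative (ZMod 2) →* M :=
  AddMonoidHom.toMultiplicativeLeft <| ZMod.lift 2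
    ⟨zmultiplesHom _ (Additive.ofMul g), by simp [two_zsmul, ← ofMul_mul, hg]⟩

theorem c2Lift_ofAdd_one {M : Type*} [Group M] (g : M) (hg : g * g = 1) :
    c2Lift g hg (Multiplicative.ofAdd 1) = g := by
  simp only [c2Lift, AddMonoidHom.toMultiplicativeLeft_apply_apply, toAdd_ofAdd]
  rw [← Int.cast_one (R := ZMod 2), ZMod.lift_coe]
  simp

theorem induction_single_one {ι : Type*} {P : (ι →₀ ZMod 2) → Prop} (f : ι →₀ ZMod 2)
    (h0 : P 0) (hadd : ∀ f g, P f → P g → P (f + g)) (hsingle : ∀ i, P (Finsupp.single i 1)) :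
    P f := by
  induction f using Finsupp.induction_linear with
  | zero => exact h0
  | add f g hf hg => exact hadd f g hf hg
  | single i s =>
    rcases zmod_two_eq_zero_or_one s with rfl | rfl
    · rwa [Finsupp.single_zero]
    · exact hsingle i

def tail {α : Type*} (S : ℕ → α) : ℕ → α := fun n => S (n + 1)

theorem tail_add {M : Type*} [Add M] (S T : ℕ → M) : tail (S + T) = tail S + tail T := rfl

theorem tail_single_zero {M : Type*} [Zero M] (s : M) : tail (Pi.single 0 s : ℕ → M) = 0 := by
  funext n; simp [tail]

def LastNonzero {M : Type*} [Zero M] (S : ℕ → M) (m : ℕ) : Prop :=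
  S m ≠ 0 ∧ ∀ k, m < k → S k = 0

theorem lastNonzero_succ_iff {M : Type*} [Zero M] {S : ℕ → M} {m : ℕ} :
    LastNonzero S (m + 1) ↔ LastNonzero (tail S) m := by
  refine ⟨fun h => ⟨h.1, fun k hk => h.2 (k + 1) (by omega)⟩, fun h => ⟨h.1, fun k hk => ?_⟩⟩
  obtain ⟨k, rfl⟩ : ∃ j, k = j + 1 := ⟨k - 1, by omega⟩
  exact h.2 k (by omega)

theorem LastNonzero.tail_eq_zero {M : Type*} [Zero M] {S : ℕ → M} (h : LastNonzero S 0) :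
    tail S = 0 :=
  funext fun k => h.2 (k + 1) k.succ_pos

theorem LastNonzero.add_single {M : Type*} [AddZeroClass M] {S : ℕ → M} {m : ℕ}
    (h : LastNonzero S m) (hm : 0 < m) (s : M) :
    LastNonzero (S + Pi.single 0 s) m :=
  ⟨by simpa [hm.ne'] using h.1, fun k hk => by simp [h.2 k hk, (hm.trans hk).ne']⟩

theorem lastNonzero_single {M : Type*} [Zero M] {s : M} (hs : s ≠ 0) :
    LastNonzero (Pi.single 0 s : ℕ → M) 0 :=
  ⟨by simpa using hs, fun k hk => by simp [hk.ne']⟩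

theorem linearIndependent_of_lastNonzero {R ι : Type*} [Ring R] [NoZeroDivisors R]
    {v : ι → ℕ → R} {d : ι → ℕ} (hd : Function.Injective d) (hv : ∀ i, LastNonzero (v i) (d i)) :
    LinearIndependent R v := by
  rw [linearIndependent_iff]
  intro l hl
  by_contra hne
  obtain ⟨i, hi, hmax⟩ := l.support.exists_max_image d (Finsupp.support_nonempty_iff.2 hne)
  have hdi := congr_fun hl (d i)
  rw [Finsupp.linearCombination_apply, Finsupp.sum, Finset.sum_apply,
    Finset.sum_eq_single i] at hdi
  · exact mul_ne_zero (Finsupp.mem_support_iff.1 hi) (hv i).1 hdi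
  · intro j hj hji
    rw [Pi.smul_apply, (hv j).2 _ (lt_of_le_of_ne (hmax j hj) (hd.ne hji)), smul_zero]
  · exact fun h => absurd hi h

mutual
def autA : List Bool → List Bool
  | [] => []
  | x :: w => (!x) :: autC w
def autB : List Bool → List Bool
  | [] => []
  | x :: w => x :: autC w
def autC : List Bool → List Bool
  | [] => []
  | x :: w => x :: if x then autA w else autB w
end

theorem involutive_autA_autB_autC (w : List Bool) :
    autA (autA w) = w ∧ autB (autB w) = w ∧ autC (autC w) = w := by
  induction w with
  | nil => exact ⟨rfl, rfl, rfl⟩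
  | cons x w ih =>
    obtain ⟨hA, hB, hC⟩ := ih
    refine ⟨?_, ?_, ?_⟩ <;> cases x <;> simp [autA, autB, autC, hA, hB, hC]

def a : Perm (List Bool) :=
  Function.Involutive.toPerm autA fun w => (involutive_autA_autB_autC w).1
def b : Perm (List Bool) :=
  Function.Involutive.toPerm autB fun w => (involutive_autA_autB_autC w).2.1
def c : Perm (List Bool) :=
  Function.Involutive.toPerm autC fun w => (involutive_autA_autB_autC w).2.2

theorem a_cons (x : Bool) (w : List Bool) : a (x :: w) = (!x) :: c w := rfl
theorem b_cons (x : Bool) (w : List Bool) : b (x :: w) = x :: c w := rfl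

theorem a_involutive : Function.Involutive a := fun w => (involutive_autA_autB_autC w).1
theorem b_involutive : Function.Involutive b := fun w => (involutive_autA_autB_autC w).2.1
theorem c_involutive : Function.Involutive c := fun w => (involutive_autA_autB_autC w).2.2

theorem a_mul_self : a * a = 1 := Equiv.ext a_involutive
theorem b_mul_self : b * b = 1 := Equiv.ext b_involutive
theorem c_mul_self : c * c = 1 := Equiv.ext c_involutive

theorem a_inv : a⁻¹ = a := inv_eq_of_mul_eq_one_right a_mul_self
theorem b_inv : b⁻¹ = b := inv_eq_of_mul_eq_one_right b_mul_self
theorem c_inv : c⁻¹ = c := inv_eq_of_mul_eq_one_right c_mul_self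

theorem eq_of_wRec {a' b' c' : Perm (List Bool)} (ha : WRec true a' c' c')
    (hb : WRec false b' c' c') (hc : WRec false c' b' a') : a' = a ∧ b' = b ∧ c' = c := by
  suffices h : ∀ w, a' w = a w ∧ b' w = b w ∧ c' w = c w from
    ⟨Equiv.ext fun w => (h w).1, Equiv.ext fun w => (h w).2.1, Equiv.ext fun w => (h w).2.2⟩
  intro w
  induction w with
  | nil => exact ⟨ha.1, hb.1, hc.1⟩
  | cons x w ih =>
    obtain ⟨hA, hB, hC⟩ := ih
    refine ⟨?_, ?_, ?_⟩ <;> cases x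
    all_goals simp only [ha.2.1, ha.2.2, hb.2.1, hb.2.2, hc.2.1, hc.2.2, hA, hB, hC]; rfl

def toggle (s : ZMod 2) (x : Bool) : Bool := if s = 0 then x else !x

theorem toggle_zero (x : Bool) : toggle 0 x = x := rfl

theorem toggle_one (x : Bool) : toggle 1 x = !x := rfl

theorem toggle_add (s t : ZMod 2) (x : Bool) : toggle (s + t) x = toggle s (toggle t x) := by
  fin_cases s <;> fin_cases t <;> cases x <;> rfl

theorem toggle_left_injective (x : Bool) : Function.Injective (toggle · x) := by
  unfold Function.Injective
  cases x <;> decide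

def flipWord : (ℕ → ZMod 2) → List Bool → List Bool
  | _, [] => []
  | S, x :: w => toggle (S 0) x :: flipWord (tail S) w

theorem flipWord_add (S T : ℕ → ZMod 2) (w : List Bool) :
    flipWord (S + T) w = flipWord S (flipWord T w) := by
  induction w generalizing S T with
  | nil => rfl
  | cons x w ih => simp only [flipWord, Pi.add_apply, toggle_add, ← ih]; rfl

theorem flipWord_zero (w : List Bool) : flipWord 0 w = w := by
  induction w with
  | nil => rfl
  | cons x w ih => exact congrArg₂ _ (if_pos rfl) ih

theorem flipWord_flipWord (S : ℕ → ZMod 2) (w : List Bool) : flipWord S (flipWord S w) = w := by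
  rw [← flipWord_add, show S + S = 0 from funext fun n => CharTwo.add_self_eq_zero (S n),
    flipWord_zero]

def flip (S : ℕ → ZMod 2) : Perm (List Bool) :=
  Function.Involutive.toPerm (flipWord S) (flipWord_flipWord S)

theorem flip_nil (S : ℕ → ZMod 2) : flip S [] = [] := rfl

theorem flip_cons (S : ℕ → ZMod 2) (x : Bool) (w : List Bool) :
    flip S (x :: w) = toggle (S 0) x :: flip (tail S) w := rfl

theorem flip_add (S T : ℕ → ZMod 2) : flip (S + T) = flip S * flip T :=
  Equiv.ext (flipWord_add S T)

theorem flip_apply_flip (S T : ℕ → ZMod 2) (w : List Bool) :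
    flip S (flip T w) = flip (S + T) w := by
  rw [flip_add]; rfl

theorem flip_zero : flip 0 = 1 := Equiv.ext flipWord_zero

theorem flip_inv (S : ℕ → ZMod 2) : (flip S)⁻¹ = flip S := rfl

theorem flip_conj (S T : ℕ → ZMod 2) : flip S * flip T * (flip S)⁻¹ = flip T := by
  rw [← flip_add, add_comm, flip_add, mul_inv_cancel_right]

theorem flip_injective : Function.Injective flip := by
  intro S T h
  funext n
  induction n generalizing S T with
  | zero =>
    have h0 := congr($h [false])
    simp only [flip_cons, flip_nil, List.cons.injEq, and_true] at h0
    exact toggle_left_injective false h0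
  | succ n ih =>
    refine ih (S := tail S) (T := tail T) (Equiv.ext fun w => ?_)
    have hw := congr($h (false :: w))
    simp only [flip_cons, List.cons.injEq] at hw
    exact hw.2

theorem a_mul_b : a * b = flip (Pi.single 0 1) := by
  refine Equiv.ext fun w => ?_
  cases w with
  | nil => rfl
  | cons x w =>
    rw [Perm.mul_apply, b_cons, a_cons, c_involutive, flip_cons, tail_single_zero, flip_zero]
    rfl

theorem b_mul_a : b * a = flip (Pi.single 0 1) := by
  rw [← flip_inv, ← a_mul_b, mul_inv_rev, a_inv, b_inv]

def u : Perm (List Bool) := a * c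

theorem u_inv : u⁻¹ = c * a := by rw [u, mul_inv_rev, a_inv, c_inv]

theorem u_cons_false (w : List Bool) :
    u (false :: w) = true :: u⁻¹ (flip (Pi.single 0 1) w) := by
  rw [u_inv, ← a_mul_b, Perm.mul_apply, Perm.mul_apply, a_involutive]
  rfl

theorem u_cons_true (w : List Bool) : u (true :: w) = false :: u⁻¹ w := by
  rw [u_inv]; rfl

theorem u_inv_cons_false (w : List Bool) : u⁻¹ (false :: w) = true :: u w := by
  rw [u_inv]; rfl

theorem u_inv_cons_true (w : List Bool) :
    u⁻¹ (true :: w) = false :: flip (Pi.single 0 1) (u w) := by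
  rw [u_inv, ← b_mul_a, u, Perm.mul_apply, Perm.mul_apply, Perm.mul_apply, a_involutive]
  rfl

/- `conjU S` and `conjUInv S` are the sequences of the flips `u * flip S * u⁻¹` and
`u⁻¹ * flip S * u`; the recursion transcribes `u_cons_false`, ..., `u_inv_cons_true`. -/
mutual
def conjU : (ℕ → ZMod 2) → ℕ → ZMod 2
  | S, 0 => S 0
  | S, n + 1 => conjUInv (tail S + Pi.single 0 (S 0)) n
termination_by structural _ n => n
def conjUInv : (ℕ → ZMod 2) → ℕ → ZMod 2
  | S, 0 => S 0
  | S, n + 1 => conjU (tail S) n + (Pi.single 0 (S 0) : ℕ → ZMod 2) n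
termination_by structural _ n => n
end

theorem conjU_apply_zero (S : ℕ → ZMod 2) : conjU S 0 = S 0 := rfl

theorem conjUInv_apply_zero (S : ℕ → ZMod 2) : conjUInv S 0 = S 0 := rfl

theorem tail_conjU (S : ℕ → ZMod 2) :
    tail (conjU S) = conjUInv (tail S + Pi.single 0 (S 0)) := rfl

theorem tail_conjUInv (S : ℕ → ZMod 2) :
    tail (conjUInv S) = conjU (tail S) + Pi.single 0 (S 0) := rfl

/- The extra flip `T` lets the induction hypothesis absorb the flips that `u_cons_false` and
`u_inv_cons_true` introduce into the sections. -/
theorem conj_flip_mul_flip_apply (w : List Bool) : ∀ S T : ℕ → ZMod 2,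
    u (flip S (u⁻¹ (flip T w))) = flip (conjU S + T) w ∧
    u⁻¹ (flip S (u (flip T w))) = flip (conjUInv S + T) w := by
  induction w with
  | nil => intro S T; exact ⟨rfl, rfl⟩
  | cons x w ih =>
    intro S T
    simp only [flip_cons T x, flip_cons _ x, Pi.add_apply, toggle_add, tail_add, tail_conjU,
      tail_conjUInv, conjU_apply_zero, conjUInv_apply_zero]
    generalize toggle (T 0) x = y
    rcases zmod_two_eq_zero_or_one (S 0) with h | h <;> cases y <;>
      simp only [h, u_cons_false, u_cons_true, u_inv_cons_false, u_inv_cons_true, flip_cons,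
        toggle_zero, toggle_one, Bool.not_true, Bool.not_false, Pi.single_zero, add_zero,
        flip_apply_flip, (ih _ _).1, (ih _ _).2] <;>
      simp only [add_comm, add_left_comm, CharTwo.add_self_eq_zero, add_zero, and_self]

theorem u_mul_flip_mul_u_inv (S : ℕ → ZMod 2) : u * flip S * u⁻¹ = flip (conjU S) :=
  Equiv.ext fun w => by simpa [flip_zero] using (conj_flip_mul_flip_apply w S 0).1

theorem u_inv_mul_flip_mul_u (S : ℕ → ZMod 2) : u⁻¹ * flip S * u = flip (conjUInv S) :=
  Equiv.ext fun w => by simpa [flip_zero] using (conj_flip_mul_flip_apply w S 0).2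

theorem conjU_zero : conjU 0 = 0 :=
  flip_injective (by rw [← u_mul_flip_mul_u_inv, flip_zero, mul_one, mul_inv_cancel])

theorem lastNonzero_conjU_conjUInv (m : ℕ) (S : ℕ → ZMod 2) (h : LastNonzero S m) :
    (Even m → LastNonzero (conjU S) (m + 2)) ∧
      (Odd m → LastNonzero (conjUInv S) (m + 2)) := by
  induction m generalizing S with
  | zero =>
    refine ⟨fun _ => ?_, fun h0 => absurd h0 Nat.not_odd_zero⟩
    rw [lastNonzero_succ_iff, lastNonzero_succ_iff, tail_conjU, LastNonzero.tail_eq_zero h,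
      zero_add, tail_conjUInv, tail_single_zero, conjU_zero, zero_add]
    exact lastNonzero_single h.1
  | succ m ih =>
    refine ⟨fun hm => lastNonzero_succ_iff.2 ?_, fun hm => lastNonzero_succ_iff.2 ?_⟩
    · have hodd : Odd m := by simpa [Nat.even_add_one] using hm
      rw [tail_conjU]
      exact (ih _ ((lastNonzero_succ_iff.1 h).add_single hodd.pos _)).2 hodd
    · have heven : Even m := by simpa [Nat.odd_add_one] using hm
      rw [tail_conjUInv]
      exact ((ih _ (lastNonzero_succ_iff.1 h)).1 heven).add_single (by omega) _

def lampSeq : ℤ → ℕ → ZMod 2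
  | (n : ℕ) => conjU^[n] (Pi.single 0 1)
  | Int.negSucc n => conjUInv^[n + 1] (Pi.single 0 1)

theorem flip_lampSeq (i : ℤ) : flip (lampSeq i) = u ^ i * (a * b) * (u ^ i)⁻¹ := by
  cases i with
  | ofNat n =>
    induction n with
    | zero => simp [lampSeq, a_mul_b]
    | succ n ih =>
      simp only [lampSeq, Int.ofNat_eq_natCast, Function.iterate_succ_apply'] at ih ⊢
      rw [← u_mul_flip_mul_u_inv, ih]
      push_cast
      group
  | negSucc n =>
    induction n with
    | zero =>
      show flip (conjUInv (Pi.single 0 1)) = _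
      rw [← u_inv_mul_flip_mul_u, ← a_mul_b, Int.negSucc_eq]
      push_cast
      group
    | succ n ih =>
      simp only [lampSeq, Function.iterate_succ_apply' conjUInv (n + 1)] at ih ⊢
      rw [← u_inv_mul_flip_mul_u, ih, Int.negSucc_eq, Int.negSucc_eq]
      push_cast
      group

theorem lastNonzero_lampSeq (i : ℤ) : LastNonzero (lampSeq i) (Equiv.intEquivNat i) := by
  cases i with
  | ofNat n =>
    show LastNonzero (conjU^[n] (Pi.single 0 1)) (2 * n)
    induction n with
    | zero => exact lastNonzero_single one_ne_zero
    | succ n ih =>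
      rw [Function.iterate_succ_apply']
      exact (lastNonzero_conjU_conjUInv _ _ ih).1 (even_two_mul n)
  | negSucc n =>
    show LastNonzero (conjUInv^[n + 1] (Pi.single 0 1)) (2 * n + 1)
    induction n with
    | zero =>
      rw [Function.iterate_one, lastNonzero_succ_iff, tail_conjUInv, tail_single_zero,
        conjU_zero, zero_add]
      exact lastNonzero_single one_ne_zero
    | succ n ih =>
      rw [Function.iterate_succ_apply']
      exact (lastNonzero_conjU_conjUInv _ _ ih).2 (odd_two_mul_add_one n)

theorem linearIndependent_lampSeq : LinearIndependent (ZMod 2) lampSeq :=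
  linearIndependent_of_lastNonzero Equiv.intEquivNat.injective lastNonzero_lampSeq

noncomputable def lampPerm (f : ℤ →₀ ZMod 2) : Perm (List Bool) :=
  flip (Finsupp.linearCombination (ZMod 2) lampSeq f)

theorem lampPerm_zero : lampPerm 0 = 1 := by rw [lampPerm, map_zero, flip_zero]

theorem lampPerm_add (f g : ℤ →₀ ZMod 2) : lampPerm (f + g) = lampPerm f * lampPerm g := by
  rw [lampPerm, map_add, flip_add]; rfl

theorem lampPerm_inv (f : ℤ →₀ ZMod 2) : (lampPerm f)⁻¹ = lampPerm f := flip_inv _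

theorem lampPerm_single_one (i : ℤ) :
    lampPerm (Finsupp.single i 1) = u ^ i * (a * b) * (u ^ i)⁻¹ := by
  rw [lampPerm, Finsupp.linearCombination_single, one_smul, flip_lampSeq]

theorem lampPerm_eq_one {f : ℤ →₀ ZMod 2} (h : lampPerm f = 1) : f = 0 :=
  linearIndependent_iff.1 linearIndependent_lampSeq f (flip_injective (h.trans flip_zero.symm))

theorem conj_lampPerm {g : Perm (List Bool)} {e : ℤ ≃ ℤ}
    (h : ∀ i, g * lampPerm (Finsupp.single i 1) * g⁻¹ = lampPerm (Finsupp.single (e i) 1))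
    (f : ℤ →₀ ZMod 2) : g * lampPerm f * g⁻¹ = lampPerm (Finsupp.equivMapDomain e f) := by
  induction f using induction_single_one with
  | h0 => simp [lampPerm_zero]
  | hadd f g hf hg =>
    rw [← Finsupp.domCongr_apply, map_add, Finsupp.domCongr_apply, Finsupp.domCongr_apply,
      lampPerm_add, lampPerm_add, ← hf, ← hg, conj_mul]
  | hsingle i => rw [Finsupp.equivMapDomain_single, h]

theorem u_zpow_conj_lampPerm (m : ℤ) (f : ℤ →₀ ZMod 2) :
    u ^ m * lampPerm f * (u ^ m)⁻¹ = lampPerm (shiftF m f) :=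
  conj_lampPerm (e := shiftE m) (fun i => by
    simp only [lampPerm_single_one, shiftE, Equiv.coe_fn_mk]
    group) f

noncomputable def lamplighterHom : Lamplighter →* Perm (List Bool) where
  toFun x := lampPerm x.lamps * u ^ x.pos
  map_one' := by simp [lampPerm_zero]
  map_mul' x y := by
    simp only [Lamplighter.mul_lamps, Lamplighter.mul_pos, lampPerm_add, zpow_add,
      ← u_zpow_conj_lampPerm]
    group

theorem lamplighterHom_apply (x : Lamplighter) : lamplighterHom x = lampPerm x.lamps * u ^ x.pos :=
  rfl

theorem lamplighterHom_injective : Function.Injective lamplighterHom := by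
  rw [injective_iff_map_eq_one]
  rintro ⟨f, m⟩ h
  change lampPerm f * u ^ m = 1 at h
  rw [mul_eq_one_iff_inv_eq, lampPerm_inv] at h
  have hm : m = 0 := by
    refine linearIndependent_lampSeq.injective (flip_injective ?_)
    rw [flip_lampSeq, flip_lampSeq, ← h, lampPerm, a_mul_b, flip_conj]
    simp
  subst hm
  rw [zpow_zero] at h
  rw [lampPerm_eq_one h]
  rfl

theorem a_mul_b_eq_u_mul_c_mul_b : a * b = u * (c * b) := by
  rw [u, mul_assoc, ← mul_assoc c, c_mul_self, one_mul]

theorem lampPerm_mem_closure (f : ℤ →₀ ZMod 2) :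
    lampPerm f ∈ Subgroup.closure {a * c, c * b} := by
  have hu : u ∈ Subgroup.closure {a * c, c * b} := Subgroup.subset_closure (by simp [u])
  have hv : c * b ∈ Subgroup.closure {a * c, c * b} := Subgroup.subset_closure (by simp)
  induction f using induction_single_one with
  | h0 => rw [lampPerm_zero]; exact one_mem _
  | hadd f g hf hg => rw [lampPerm_add]; exact mul_mem hf hg
  | hsingle i =>
    rw [lampPerm_single_one, a_mul_b_eq_u_mul_c_mul_b]
    exact mul_mem (mul_mem (zpow_mem hu i) (mul_mem hu hv)) (inv_mem (zpow_mem hu i))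

theorem range_lamplighterHom : lamplighterHom.range = Subgroup.closure {a * c, c * b} := by
  refine le_antisymm ?_ ((Subgroup.closure_le _).2 ?_)
  · rintro _ ⟨⟨f, m⟩, rfl⟩
    exact mul_mem (lampPerm_mem_closure f) (zpow_mem (Subgroup.subset_closure (by simp [u])) m)
  · rintro _ (rfl | rfl)
    · refine ⟨⟨0, 1⟩, ?_⟩
      rw [lamplighterHom_apply, lampPerm_zero, one_mul, zpow_one]; rfl
    · refine ⟨⟨Finsupp.single (-1) 1, -1⟩, ?_⟩
      rw [lamplighterHom_apply, lampPerm_single_one, a_mul_b_eq_u_mul_c_mul_b]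
      group

theorem c_ne_flip (S : ℕ → ZMod 2) : c ≠ flip S := by
  intro h
  have h₀ : [false, false] = flip S [false, false] := congr($h [false, false])
  have h₁ : [true, true] = flip S [true, false] := congr($h [true, false])
  simp only [flip_cons, flip_nil, List.cons.injEq] at h₀ h₁
  exact Bool.false_ne_true (h₀.2.1.trans h₁.2.1.symm)

theorem c_not_mem_range_lamplighterHom : c ∉ lamplighterHom.range := by
  rintro ⟨x, hx⟩
  have hx2 : x * x = 1 := lamplighterHom_injective (by rw [map_mul, hx, c_mul_self, map_one])
  have hpos : x.pos = 0 := by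
    have := congr_arg Lamplighter.pos hx2
    simp only [Lamplighter.mul_pos, Lamplighter.one_pos] at this
    omega
  rw [lamplighterHom_apply, hpos, zpow_zero, mul_one] at hx
  exact c_ne_flip _ hx.symm

theorem c_mul_u_mul_c_inv : c * u * c⁻¹ = u⁻¹ := by
  rw [u, c_inv, mul_inv_rev, a_inv, c_inv, mul_assoc, mul_assoc, c_mul_self, mul_one]

theorem c_mul_c_mul_b_mul_c_inv : c * (c * b) * c⁻¹ = (c * b)⁻¹ := by
  rw [mul_inv_rev, b_inv, ← mul_assoc, c_mul_self, one_mul]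

theorem c_conj_lampPerm_single_one (i : ℤ) :
    c * lampPerm (Finsupp.single i 1) * c⁻¹ = lampPerm (Finsupp.single (-1 - i) 1) := by
  have hu : c * u ^ i * c⁻¹ = u ^ (-i) := by
    rw [← conj_zpow, c_mul_u_mul_c_inv, inv_zpow, zpow_neg]
  have hab : c * (a * b) * c⁻¹ = u⁻¹ * (a * b) * u := by
    conv_lhs => rw [a_mul_b, ← b_mul_a]
    rw [u_inv, u, c_inv]
    simp only [mul_assoc, ← mul_assoc a a, a_mul_self, one_mul]
  rw [lampPerm_single_one, lampPerm_single_one]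
  calc c * (u ^ i * (a * b) * (u ^ i)⁻¹) * c⁻¹
      = (c * u ^ i * c⁻¹) * (c * (a * b) * c⁻¹) * (c * u ^ i * c⁻¹)⁻¹ := by group
    _ = u ^ (-1 - i) * (a * b) * (u ^ (-1 - i))⁻¹ := by rw [hu, hab]; group

def reflectLamps : (ℤ →₀ ZMod 2) ≃+ (ℤ →₀ ZMod 2) :=
  Finsupp.domCongr (Equiv.subLeft (-1))

theorem reflectLamps_apply (f : ℤ →₀ ZMod 2) (i : ℤ) : reflectLamps f i = f (-1 - i) := by
  simp [reflectLamps, sub_eq_add_neg, add_comm]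

theorem reflectLamps_reflectLamps (f : ℤ →₀ ZMod 2) : reflectLamps (reflectLamps f) = f := by
  ext i; simp [reflectLamps_apply]

theorem reflectLamps_shiftF (m : ℤ) (f : ℤ →₀ ZMod 2) :
    reflectLamps (shiftF m f) = shiftF (-m) (reflectLamps f) := by
  ext i; simp only [reflectLamps_apply, shiftF_apply]; ring_nf

theorem c_conj_lampPerm (f : ℤ →₀ ZMod 2) :
    c * lampPerm f * c⁻¹ = lampPerm (reflectLamps f) :=
  conj_lampPerm (e := Equiv.subLeft (-1)) c_conj_lampPerm_single_one f

noncomputable def reflect : MulAut Lamplighter where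
  toFun x := ⟨reflectLamps x.lamps, -x.pos⟩
  invFun x := ⟨reflectLamps x.lamps, -x.pos⟩
  left_inv x := Lamplighter.ext (reflectLamps_reflectLamps _) (neg_neg _)
  right_inv x := Lamplighter.ext (reflectLamps_reflectLamps _) (neg_neg _)
  map_mul' x y := Lamplighter.ext
    (show reflectLamps (x.lamps + shiftF x.pos y.lamps) =
      reflectLamps x.lamps + shiftF (-x.pos) (reflectLamps y.lamps) by
      rw [map_add, reflectLamps_shiftF])
    (neg_add _ _)

theorem reflect_mul_self : reflect * reflect = 1 :=
  MulEquiv.ext fun _ => Lamplighter.ext (reflectLamps_reflectLamps _) (neg_neg _)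

theorem c_conj_lamplighterHom (x : Lamplighter) :
    c * lamplighterHom x * c⁻¹ = lamplighterHom (reflect x) := by
  have hu : c * u ^ x.pos * c⁻¹ = u ^ (-x.pos) := by
    rw [← conj_zpow, c_mul_u_mul_c_inv, inv_zpow, zpow_neg]
  rw [lamplighterHom_apply, lamplighterHom_apply, ← conj_mul, c_conj_lampPerm, hu]
  rfl

noncomputable def reflectHom : Multiplicative (ZMod 2) →* MulAut Lamplighter :=
  c2Lift reflect reflect_mul_self

noncomputable def semidirectToPerm :
    SemidirectProduct Lamplighter (Multiplicative (ZMod 2)) reflectHom →* Perm (List Bool) :=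
  SemidirectProduct.lift lamplighterHom (c2Lift c c_mul_self) fun k => by
    rcases multiplicative_zmod_two_eq_one_or_ofAdd_one k with rfl | rfl
    · ext x : 1; simp
    · ext x : 1
      simp [reflectHom, c2Lift_ofAdd_one, c_conj_lamplighterHom]

theorem semidirectToPerm_injective : Function.Injective semidirectToPerm := by
  rw [injective_iff_map_eq_one]
  rintro ⟨x, k⟩ h
  change lamplighterHom x * c2Lift c c_mul_self k = 1 at h
  rcases multiplicative_zmod_two_eq_one_or_ofAdd_one k with rfl | rfl
  · rw [map_one, mul_one, ← map_one lamplighterHom] at h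
    rw [lamplighterHom_injective h]
    rfl
  · rw [c2Lift_ofAdd_one, mul_eq_one_iff_eq_inv, c_inv] at h
    exact absurd ⟨x, h⟩ c_not_mem_range_lamplighterHom

theorem map_range_inl_semidirectToPerm :
    (SemidirectProduct.inl.range).map semidirectToPerm = Subgroup.closure {a * c, c * b} := by
  rw [← MonoidHom.range_comp, semidirectToPerm, SemidirectProduct.lift_comp_inl,
    range_lamplighterHom]

theorem closure_ac_cb_le : Subgroup.closure {a * c, c * b} ≤ Subgroup.closure {a, b, c} := by
  rw [Subgroup.closure_le]
  rintro _ (rfl | rfl) <;>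
    exact mul_mem (Subgroup.subset_closure (by simp)) (Subgroup.subset_closure (by simp))

theorem range_semidirectToPerm : semidirectToPerm.range = Subgroup.closure {a, b, c} := by
  have hH : Subgroup.closure {a * c, c * b} ≤ semidirectToPerm.range := by
    rw [← map_range_inl_semidirectToPerm]
    exact Subgroup.map_le_range _ _
  have hc : c ∈ semidirectToPerm.range :=
    ⟨SemidirectProduct.inr (Multiplicative.ofAdd 1), by
      simp [semidirectToPerm, c2Lift_ofAdd_one]⟩
  refine le_antisymm ?_ ((Subgroup.closure_le _).2 ?_)
  · rintro _ ⟨⟨x, k⟩, rfl⟩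
    refine mul_mem (closure_ac_cb_le (range_lamplighterHom ▸ ⟨x, rfl⟩)) ?_
    rcases multiplicative_zmod_two_eq_one_or_ofAdd_one k with rfl | rfl
    · rw [map_one]; exact one_mem _
    · rw [c2Lift_ofAdd_one]; exact Subgroup.subset_closure (by simp)
  · rintro _ (rfl | rfl | rfl)
    · simpa [mul_assoc, c_mul_self] using
        mul_mem (hH (Subgroup.subset_closure (Set.mem_insert _ _))) hc
    · simpa [← mul_assoc, c_mul_self] using
        mul_mem hc (hH (Subgroup.subset_closure (Set.mem_insert_of_mem _ rfl)))
    · exact hc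

theorem conj_mem_closure_ac_cb {g h : Perm (List Bool)} (hg : g ∈ Subgroup.closure {a, b, c})
    (hh : h ∈ Subgroup.closure {a * c, c * b}) :
    g * h * g⁻¹ ∈ Subgroup.closure {a * c, c * b} := by
  rw [← map_range_inl_semidirectToPerm] at hh ⊢
  exact conj_mem_map_range_inl _ (range_semidirectToPerm ▸ hg) hh

theorem relIndex_closure_ac_cb :
    (Subgroup.closure {a * c, c * b}).relIndex (Subgroup.closure {a, b, c}) = 2 := by
  rw [← map_range_inl_semidirectToPerm, ← range_semidirectToPerm,
    relIndex_map_range_inl _ semidirectToPerm_injective, Nat.card_congr Multiplicative.toAdd,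
    Nat.card_zmod]

noncomputable def closureEquivLamplighter : Subgroup.closure {a * c, c * b} ≃* Lamplighter :=
  ((MonoidHom.ofInjective lamplighterHom_injective).trans
    (MulEquiv.subgroupCongr range_lamplighterHom)).symm

noncomputable def closureEquivSemidirect : Subgroup.closure {a, b, c} ≃*
    SemidirectProduct Lamplighter (Multiplicative (ZMod 2)) reflectHom :=
  ((MonoidHom.ofInjective semidirectToPerm_injective).trans
    (MulEquiv.subgroupCongr range_semidirectToPerm)).symm

end LamplighterAutomaton

/-- Let `a, b, c` be the tree automorphisms defined by the wreath
recursion `a = σ(c,c)`, `b = (c,c)`, `c = (b,a)`, and set `G = ⟨a,b,c⟩`,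
`H = ⟨ac, cb⟩`.  Then `a² = b² = c² = 1`, `H` is a normal subgroup of index 2 in `G`,
conjugation by `c` inverts both generators `ac` and `cb` of `H`, `H` is isomorphic to
the lamplighter group `ℤ ≀ C₂ = (⊕_{i∈ℤ} ℤ/2ℤ) ⋊ ℤ`, and consequently `G` is isomorphic
to a semidirect product `C₂ ⋉ (ℤ ≀ C₂)`. -/
theorem generates_C2_semidirect_lamplighter (a b c : Equiv.Perm (List Bool))
    (ha : WRec true a c c) (hb : WRec false b c c) (hc : WRec false c b a) :
    a * a = 1 ∧ b * b = 1 ∧ c * c = 1 ∧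
    Subgroup.closure {a * c, c * b} ≤ Subgroup.closure {a, b, c} ∧
    (∀ g ∈ Subgroup.closure {a, b, c}, ∀ h ∈ Subgroup.closure {a * c, c * b},
      g * h * g⁻¹ ∈ Subgroup.closure {a * c, c * b}) ∧
    (Subgroup.closure {a * c, c * b}).relIndex (Subgroup.closure {a, b, c}) = 2 ∧
    c * (a * c) * c⁻¹ = (a * c)⁻¹ ∧
    c * (c * b) * c⁻¹ = (c * b)⁻¹ ∧
    Nonempty (Subgroup.closure {a * c, c * b} ≃* Lamplighter) ∧
    (∃ φ : Multiplicative (ZMod 2) →* MulAut Lamplighter,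
      Nonempty (Subgroup.closure {a, b, c} ≃*
        SemidirectProduct Lamplighter (Multiplicative (ZMod 2)) φ)) := by
  obtain ⟨rfl, rfl, rfl⟩ := LamplighterAutomaton.eq_of_wRec ha hb hc
  open LamplighterAutomaton in
  exact ⟨a_mul_self, b_mul_self, c_mul_self, closure_ac_cb_le,
    fun _ hg _ hh => conj_mem_closure_ac_cb hg hh, relIndex_closure_ac_cb, c_mul_u_mul_c_inv,
    c_mul_c_mul_b_mul_c_inv, ⟨closureEquivLamplighter⟩, reflectHom,
    ⟨closureEquivSemidirect⟩⟩
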